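/- Let P₁, P₂, Q₁, Q₂ be finite posets. If Q₁ minimally rainbow forces P₁ and Q₂ minimally rainbow forces P₂, then the linear sum Q₁^{Q₂} minimally rainbow forces the linear sum P₁^{P₂}. -/

import Mathlib

/-- A (strong/induced) copy of the poset `P` in the poset `Q`: an injective map
reflecting and preserving the order. -/
def IsCopy {P Q : Type*} [PartialOrder P] [PartialOrder Q] (f : P → Q) : Prop :=
  Function.Injective f ∧ ∀ p p' : P, f p ≤ f p' ↔ p ≤ p'

/-- A proper coloring of a poset: distinct comparable elements get distinct colors. -/
def ProperColoring {Q : Type*} [PartialOrder Q] (c : Q → ℕ) : Prop :=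
  ∀ q q' : Q, q ≠ q' → (q ≤ q' ∨ q' ≤ q) → c q ≠ c q'

/-- `Q` rainbow forces `P`: every proper coloring of `Q` admits a rainbow copy of `P`. -/
def RainbowForces (Q : Type*) [PartialOrder Q] (P : Type*) [PartialOrder P] : Prop :=
  ∀ c : Q → ℕ, ProperColoring c → ∃ f : P → Q, IsCopy f ∧ Function.Injective (c ∘ f)

/-- `Q` minimally rainbow forces `P`: `Q` rainbow forces `P` but no one-element-deleted
induced subposet of `Q` does. -/
def MinRainbowForces (Q : Type*) [PartialOrder Q] (P : Type*) [PartialOrder P] : Prop :=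
  RainbowForces Q P ∧ ∀ q : Q, ¬RainbowForces {x : Q // x ≠ q} P

/-!
Given a proper colouring of `Q₁ ⊕ₗ Q₂`, rainbow copies of `P₁` in `Q₁` and of `P₂` in `Q₂` combine
to a rainbow copy of `P₁ ⊕ₗ P₂`: every element of `Q₁` is comparable to every element of `Q₂`, so
the two halves share no colour.

For minimality, delete `q ∈ Q₁` (the case `q ∈ Q₂` is dual). A colouring of `Q₁ ∖ {q}` without
rainbow `P₁` extends, with a fresh colour at `q`, to a colouring of `Q₁` whose rainbow copies of
`P₁` all pass through `q`. Doing the same for a minimal element of `Q₂` gives a colouring of `Q₂`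
in which no rainbow copy of `P₂` lies strictly above an element. Colour `Q₁` with even and `Q₂`
with odd numbers. A rainbow copy of `P₁ ⊕ₗ P₂` then either maps `P₁` into `Q₁`, hence meets `q`,
or sends some element of `P₁` into `Q₂`, which forces all of `P₂` strictly above it in `Q₂`.
-/

open Function Sum

section Copies

variable {P Q R : Type*} [PartialOrder P] [PartialOrder Q] [PartialOrder R]

theorem IsCopy.of_le_iff {f : P → Q} (h : ∀ p p', f p ≤ f p' ↔ p ≤ p') : IsCopy f :=
  ⟨fun p p' e => le_antisymm ((h p p').1 e.le) ((h p' p).1 e.ge), h⟩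

theorem IsCopy.lt_iff {f : P → Q} (hf : IsCopy f) {p p' : P} : f p < f p' ↔ p < p' := by
  simp only [lt_iff_le_not_ge, hf.2]

theorem IsCopy.comp {g : Q → R} {f : P → Q} (hg : IsCopy g) (hf : IsCopy f) : IsCopy (g ∘ f) :=
  .of_le_iff fun p p' => (hg.2 _ _).trans (hf.2 p p')

theorem IsCopy.of_comp {g : Q → R} {f : P → Q} (hgf : IsCopy (g ∘ f)) (hg : IsCopy g) :
    IsCopy f :=
  .of_le_iff fun p p' => (hg.2 _ _).symm.trans (hgf.2 p p')

theorem isCopy_subtype_val (s : Q → Prop) : IsCopy (Subtype.val : {x // s x} → Q) :=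
  .of_le_iff fun _ _ => Iff.rfl

theorem isCopy_inlₗ : IsCopy (inlₗ : Q → Q ⊕ₗ R) :=
  .of_le_iff fun _ _ => Lex.inl_le_inl_iff

theorem isCopy_inrₗ : IsCopy (inrₗ : R → Q ⊕ₗ R) :=
  .of_le_iff fun _ _ => Lex.inr_le_inr_iff

def IsRainbowCopy (c : Q → ℕ) (f : P → Q) : Prop :=
  IsCopy f ∧ Injective (c ∘ f)

theorem ProperColoring.of_lt {c : Q → ℕ} (h : ∀ q q' : Q, q < q' → c q ≠ c q') :
    ProperColoring c := by
  rintro q q' hne (hle | hge)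
  · exact h q q' (hle.lt_of_ne hne)
  · exact (h q' q (hge.lt_of_ne hne.symm)).symm

theorem ProperColoring.ne_of_lt {c : Q → ℕ} (hc : ProperColoring c) {q q' : Q} (h : q < q') :
    c q ≠ c q' :=
  hc q q' h.ne (.inl h.le)

theorem ProperColoring.comp {c : R → ℕ} {e : Q → R} (hc : ProperColoring c) (he : IsCopy e) :
    ProperColoring (c ∘ e) :=
  fun q q' hne hcmp => hc _ _ (he.1.ne hne) (hcmp.imp (he.2 q q').2 (he.2 q' q).2)

theorem IsRainbowCopy.comp {c : R → ℕ} {f : Q → R} {e : P → Q} (hf : IsRainbowCopy c f)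
    (he : IsCopy e) : IsRainbowCopy c (f ∘ e) :=
  ⟨hf.1.comp he, hf.2.comp he.1⟩

theorem isRainbowCopy_comp_iff {c : R → ℕ} {e : Q → R} {g : P → Q} (he : IsCopy e) :
    IsRainbowCopy c (e ∘ g) ↔ IsRainbowCopy (c ∘ e) g :=
  ⟨fun h => ⟨h.1.of_comp he, h.2⟩, fun h => ⟨he.comp h.1, h.2⟩⟩

theorem IsRainbowCopy.of_comp_left {c : Q → ℕ} {f : P → Q} (k : ℕ → ℕ)
    (hf : IsRainbowCopy (k ∘ c) f) : IsRainbowCopy c f :=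
  ⟨hf.1, Injective.of_comp (f := k) hf.2⟩

theorem IsRainbowCopy.restrict {S : Type*} [PartialOrder S] {c : R → ℕ} {f : Q → R}
    {d : P → Q} {e : S → R} {g : P → S} (hf : IsRainbowCopy c f) (hd : IsCopy d)
    (he : IsCopy e) (h : ∀ p, f (d p) = e (g p)) : IsRainbowCopy (c ∘ e) g := by
  have hfd : f ∘ d = e ∘ g := funext h
  exact (isRainbowCopy_comp_iff he).1 (hfd ▸ hf.comp hd)

end Copies

section Deletion

variable {P Q : Type*} [PartialOrder P] [PartialOrder Q]

theorem not_rainbowForces_compl_of_coloring {q : Q} {c : Q → ℕ} (hc : ProperColoring c)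
    (hit : ∀ f : P → Q, IsRainbowCopy c f → q ∈ Set.range f) :
    ¬RainbowForces {x // x ≠ q} P := by
  intro h
  obtain ⟨g, hg⟩ := h _ (hc.comp (isCopy_subtype_val _))
  obtain ⟨p, hp⟩ := hit _ ((isRainbowCopy_comp_iff (isCopy_subtype_val _)).2 hg)
  exact (g p).2 hp

theorem exists_coloring_of_not_rainbowForces_compl [Finite Q] {q : Q}
    (h : ¬RainbowForces {x // x ≠ q} P) :
    ∃ c : Q → ℕ, ProperColoring c ∧ ∀ f : P → Q, IsRainbowCopy c f → q ∈ Set.range f := by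
  classical
  simp only [RainbowForces, not_forall, not_exists] at h
  obtain ⟨c', hc', hno⟩ := h
  obtain ⟨N, hN⟩ := (Set.finite_range c').exists_notMem
  let c : Q → ℕ := fun x => if hx : x = q then N else c' ⟨x, hx⟩
  have hc_val : c ∘ Subtype.val = c' := funext fun x => dif_neg x.2
  refine ⟨c, .of_lt fun x y hxy => ?_, fun f hf => ?_⟩
  · by_cases hx : x = q
    · have hy : y ≠ q := hx ▸ hxy.ne'
      simpa [c, hx, hy] using fun e => hN ⟨_, e.symm⟩
    by_cases hy : y = q
    · simpa [c, hx, hy] using fun e => hN ⟨_, e⟩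
    simpa [c, hx, hy] using hc'.ne_of_lt (show (⟨x, hx⟩ : {x // x ≠ q}) < ⟨y, hy⟩ from hxy)
  · by_contra hq
    have hf' : ∀ p, f p ≠ q := fun p hp => hq ⟨p, hp⟩
    refine hno (fun p => ⟨f p, hf' p⟩) ?_
    rw [← hc_val]
    exact (isRainbowCopy_comp_iff (isCopy_subtype_val _)).1 hf

theorem exists_coloring_forall_rainbowCopy_not_strictLowerBound [Finite Q]
    (h : ∀ q : Q, ¬RainbowForces {x // x ≠ q} P) :
    ∃ c : Q → ℕ, ProperColoring c ∧ ∀ f : P → Q, IsRainbowCopy c f → ∀ u, ¬∀ p, u < f p := by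
  rcases isEmpty_or_nonempty Q with hQ | hQ
  · exact ⟨fun _ => 0, fun q => isEmptyElim q, fun _ _ u => isEmptyElim u⟩
  obtain ⟨m, hm⟩ := Set.finite_univ.exists_minimal (Set.univ_nonempty (α := Q))
  obtain ⟨c, hc, hit⟩ := exists_coloring_of_not_rainbowForces_compl (h m)
  refine ⟨c, hc, fun f hf u hu => ?_⟩
  obtain ⟨p, rfl⟩ := hit f hf
  exact hm.not_lt (Set.mem_univ u) (hu p)

theorem exists_coloring_forall_rainbowCopy_not_strictUpperBound [Finite Q]
    (h : ∀ q : Q, ¬RainbowForces {x // x ≠ q} P) :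
    ∃ c : Q → ℕ, ProperColoring c ∧ ∀ f : P → Q, IsRainbowCopy c f → ∀ u, ¬∀ p, f p < u := by
  rcases isEmpty_or_nonempty Q with hQ | hQ
  · exact ⟨fun _ => 0, fun q => isEmptyElim q, fun _ _ u => isEmptyElim u⟩
  obtain ⟨m, hm⟩ := Set.finite_univ.exists_maximal (Set.univ_nonempty (α := Q))
  obtain ⟨c, hc, hit⟩ := exists_coloring_of_not_rainbowForces_compl (h m)
  refine ⟨c, hc, fun f hf u hu => ?_⟩
  obtain ⟨p, rfl⟩ := hit f hf
  exact hm.not_gt (Set.mem_univ u) (hu p)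

end Deletion

section LinearSum

variable {P₁ P₂ Q₁ Q₂ : Type*} [PartialOrder P₁] [PartialOrder P₂] [PartialOrder Q₁]
  [PartialOrder Q₂]

theorem Sum.Lex.exists_inrₗ_of_inrₗ_lt {u : Q₂} {x : Q₁ ⊕ₗ Q₂} (h : inrₗ u < x) :
    ∃ y, x = inrₗ y ∧ u < y := by
  rcases x with a | y
  · exact absurd h Lex.not_inr_lt_inl
  · exact ⟨y, rfl, Lex.inr_lt_inr_iff.1 h⟩

theorem Sum.Lex.exists_inlₗ_of_lt_inlₗ {u : Q₁} {x : Q₁ ⊕ₗ Q₂} (h : x < inlₗ u) :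
    ∃ y, x = inlₗ y ∧ y < u := by
  rcases x with y | b
  · exact ⟨y, rfl, Lex.inl_lt_inl_iff.1 h⟩
  · exact absurd h Lex.not_inr_lt_inl

theorem IsCopy.lexSumMap {f₁ : P₁ → Q₁} {f₂ : P₂ → Q₂} (h₁ : IsCopy f₁) (h₂ : IsCopy f₂) :
    IsCopy fun x : P₁ ⊕ₗ P₂ => toLex (Sum.map f₁ f₂ (ofLex x)) :=
  .of_le_iff <| by
    rintro (a | b) (a' | b')
    · exact Lex.inl_le_inl_iff.trans ((h₁.2 a a').trans Lex.inl_le_inl_iff.symm)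
    · exact iff_of_true (Lex.inl_le_inr _ _) (Lex.inl_le_inr _ _)
    · exact iff_of_false Lex.not_inr_le_inl Lex.not_inr_le_inl
    · exact Lex.inr_le_inr_iff.trans ((h₂.2 b b').trans Lex.inr_le_inr_iff.symm)

theorem RainbowForces.lexSum (h₁ : RainbowForces Q₁ P₁) (h₂ : RainbowForces Q₂ P₂) :
    RainbowForces (Q₁ ⊕ₗ Q₂) (P₁ ⊕ₗ P₂) := by
  intro c hc
  obtain ⟨f₁, hf₁, hr₁⟩ := h₁ _ (hc.comp isCopy_inlₗ)
  obtain ⟨f₂, hf₂, hr₂⟩ := h₂ _ (hc.comp isCopy_inrₗ)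
  refine ⟨_, hf₁.lexSumMap hf₂, ?_⟩
  rintro (a | b) (a' | b') h
  · exact congrArg inlₗ (hr₁ h)
  · exact absurd h (hc.ne_of_lt (Lex.inl_lt_inr _ _))
  · exact absurd h.symm (hc.ne_of_lt (Lex.inl_lt_inr _ _))
  · exact congrArg inrₗ (hr₂ h)

def lexSumColoring (c₁ : Q₁ → ℕ) (c₂ : Q₂ → ℕ) : Q₁ ⊕ₗ Q₂ → ℕ :=
  fun x => Sum.elim (fun a => 2 * c₁ a) (fun b => 2 * c₂ b + 1) (ofLex x)

theorem ProperColoring.lexSum {c₁ : Q₁ → ℕ} {c₂ : Q₂ → ℕ} (h₁ : ProperColoring c₁)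
    (h₂ : ProperColoring c₂) : ProperColoring (lexSumColoring c₁ c₂) := by
  refine .of_lt ?_
  rintro (a | b) (a' | b') h
  · have := h₁.ne_of_lt (Lex.inl_lt_inl_iff.1 h)
    change 2 * c₁ a ≠ 2 * c₁ a'
    omega
  · change 2 * c₁ a ≠ 2 * c₂ b' + 1
    omega
  · exact absurd h Lex.not_inr_lt_inl
  · have := h₂.ne_of_lt (Lex.inr_lt_inr_iff.1 h)
    change 2 * c₂ b + 1 ≠ 2 * c₂ b' + 1
    omega

variable {c₁ : Q₁ → ℕ} {c₂ : Q₂ → ℕ} {f : P₁ ⊕ₗ P₂ → Q₁ ⊕ₗ Q₂}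

theorem IsRainbowCopy.lexSum_cases_left (hf : IsRainbowCopy (lexSumColoring c₁ c₂) f) :
    (∃ g : P₁ → Q₁, IsRainbowCopy c₁ g ∧ ∀ a, f (inlₗ a) = inlₗ (g a)) ∨
      ∃ g : P₂ → Q₂, IsRainbowCopy c₂ g ∧ ∃ u, ∀ b, u < g b := by
  by_cases h : ∀ a, ∃ x, f (inlₗ a) = inlₗ x
  · choose g hg using h
    exact .inl ⟨g, (hf.restrict isCopy_inlₗ isCopy_inlₗ hg).of_comp_left (2 * ·), hg⟩
  push Not at h
  obtain ⟨a₀, ha₀⟩ := h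
  obtain ⟨u, hu⟩ : ∃ u, f (inlₗ a₀) = inrₗ u := by
    rcases hx : f (inlₗ a₀) with x | u
    · exact absurd hx (ha₀ x)
    · exact ⟨u, rfl⟩
  have above : ∀ b, ∃ y, f (inrₗ b) = inrₗ y ∧ u < y := fun b =>
    Lex.exists_inrₗ_of_inrₗ_lt (hu ▸ hf.1.lt_iff.2 (Lex.inl_lt_inr a₀ b))
  choose g hg hug using above
  exact .inr ⟨g, (hf.restrict isCopy_inrₗ isCopy_inrₗ hg).of_comp_left (2 * · + 1), u, hug⟩

theorem IsRainbowCopy.lexSum_cases_right (hf : IsRainbowCopy (lexSumColoring c₁ c₂) f) :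
    (∃ g : P₂ → Q₂, IsRainbowCopy c₂ g ∧ ∀ b, f (inrₗ b) = inrₗ (g b)) ∨
      ∃ g : P₁ → Q₁, IsRainbowCopy c₁ g ∧ ∃ u, ∀ a, g a < u := by
  by_cases h : ∀ b, ∃ y, f (inrₗ b) = inrₗ y
  · choose g hg using h
    exact .inl ⟨g, (hf.restrict isCopy_inrₗ isCopy_inrₗ hg).of_comp_left (2 * · + 1), hg⟩
  push Not at h
  obtain ⟨b₀, hb₀⟩ := h
  obtain ⟨u, hu⟩ : ∃ u, f (inrₗ b₀) = inlₗ u := by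
    rcases hy : f (inrₗ b₀) with u | y
    · exact ⟨u, rfl⟩
    · exact absurd hy (hb₀ y)
  have below : ∀ a, ∃ x, f (inlₗ a) = inlₗ x ∧ x < u := fun a =>
    Lex.exists_inlₗ_of_lt_inlₗ (hu ▸ hf.1.lt_iff.2 (Lex.inl_lt_inr a b₀))
  choose g hg hgu using below
  exact .inr ⟨g, (hf.restrict isCopy_inlₗ isCopy_inlₗ hg).of_comp_left (2 * ·), u, hgu⟩

variable [Finite Q₁] [Finite Q₂]

theorem not_rainbowForces_compl_inlₗ {q : Q₁} (h₁ : ¬RainbowForces {x // x ≠ q} P₁)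
    (h₂ : ∀ q : Q₂, ¬RainbowForces {x // x ≠ q} P₂) :
    ¬RainbowForces {x : Q₁ ⊕ₗ Q₂ // x ≠ inlₗ q} (P₁ ⊕ₗ P₂) := by
  obtain ⟨c₁, hc₁, hit⟩ := exists_coloring_of_not_rainbowForces_compl h₁
  obtain ⟨c₂, hc₂, hno⟩ := exists_coloring_forall_rainbowCopy_not_strictLowerBound h₂
  refine not_rainbowForces_compl_of_coloring (hc₁.lexSum hc₂) fun f hf => ?_
  rcases hf.lexSum_cases_left with ⟨g, hg, hfg⟩ | ⟨g, hg, u, hu⟩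
  · obtain ⟨a, rfl⟩ := hit g hg
    exact ⟨inlₗ a, hfg a⟩
  · exact (hno g hg u hu).elim

theorem not_rainbowForces_compl_inrₗ {q : Q₂} (h₁ : ∀ q : Q₁, ¬RainbowForces {x // x ≠ q} P₁)
    (h₂ : ¬RainbowForces {x // x ≠ q} P₂) :
    ¬RainbowForces {x : Q₁ ⊕ₗ Q₂ // x ≠ inrₗ q} (P₁ ⊕ₗ P₂) := by
  obtain ⟨c₁, hc₁, hno⟩ := exists_coloring_forall_rainbowCopy_not_strictUpperBound h₁
  obtain ⟨c₂, hc₂, hit⟩ := exists_coloring_of_not_rainbowForces_compl h₂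
  refine not_rainbowForces_compl_of_coloring (hc₁.lexSum hc₂) fun f hf => ?_
  rcases hf.lexSum_cases_right with ⟨g, hg, hfg⟩ | ⟨g, hg, u, hu⟩
  · obtain ⟨b, rfl⟩ := hit g hg
    exact ⟨inrₗ b, hfg b⟩
  · exact (hno g hg u hu).elim

end LinearSum

theorem statement6_general (Q₁ Q₂ P₁ P₂ : Type)
    [PartialOrder Q₁] [PartialOrder Q₂] [PartialOrder P₁] [PartialOrder P₂]
    [Fintype Q₁] [Fintype Q₂]
    (h1 : MinRainbowForces Q₁ P₁) (h2 : MinRainbowForces Q₂ P₂) :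
    MinRainbowForces (Q₁ ⊕ₗ Q₂) (P₁ ⊕ₗ P₂) := by
  refine ⟨h1.1.lexSum h2.1, ?_⟩
  rintro (q | q)
  · exact not_rainbowForces_compl_inlₗ (h1.2 q) h2.2
  · exact not_rainbowForces_compl_inrₗ h1.2 (h2.2 q)

/-- If `Q₁` minimally rainbow forces `P₁` and `Q₂` minimally rainbow forces
`P₂`, then the linear sum `Q₁^{Q₂}` minimally rainbow forces the linear sum `P₁^{P₂}`. -/
theorem statement6 (Q₁ Q₂ P₁ P₂ : Type)
    [PartialOrder Q₁] [PartialOrder Q₂] [PartialOrder P₁] [PartialOrder P₂]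
    [Fintype Q₁] [Fintype Q₂] [Fintype P₁] [Fintype P₂]
    (h1 : MinRainbowForces Q₁ P₁) (h2 : MinRainbowForces Q₂ P₂) :
    MinRainbowForces (Q₁ ⊕ₗ Q₂) (P₁ ⊕ₗ P₂) :=
  statement6_general Q₁ Q₂ P₁ P₂ h1 h2
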